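/- arXiv:1206.4211 — 3 statements merged into one kernel-verified Lean document; each statement's English description precedes it below -/
import Mathlib

section
/- Let n ≥ 2, k ≥ 1, l ≥ 1, and let a ∈ R(2k,n) satisfy Σ_{|α| ≤ 2k-1}|a_α| < l and inf_{ξ ∈ ∂B_n}|P_0[a](ξ)| > 1/l. Let ρ_l = 1 + l² and define a_j(ξ) = (1/(2πi)) ∮_{|ζ|=ρ_l} ζ^{j-1}/P[a](ζξ) dζ for j ∈ ℕ, ξ ∈ ∂B_n. Then |a_j(ξ)| ≤ l (1 + l²)^{j+1-2k} for all ξ ∈ ∂B_n and all j ∈ ℕ. -/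
open Finset

/-- Multi-indices over `Fin n` with degree at most `d`. -/
def degLE (n d : ℕ) : Finset (Fin n → ℕ) :=
  (Finset.range (d + 1)).biUnion (Finset.Nat.antidiagonalTuple n)

/-- Multi-indices over `Fin n` with degree exactly `d`. -/
def degEQ (n d : ℕ) : Finset (Fin n → ℕ) := Finset.Nat.antidiagonalTuple n d

/-- The principal symbol `P₀[a](ξ) = ∑_{|α| = 2k} a_α ξ^α`. -/
noncomputable def P0 (n k : ℕ) (a : (Fin n → ℕ) → ℝ) (ξ : Fin n → ℝ) : ℝ :=
  ∑ α ∈ degEQ n (2 * k), a α * ∏ i, ξ i ^ α i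

/-- The polynomial `P[a](ζξ) = ∑_{|α| ≤ 2k} a_α ζ^{|α|} ξ^α` for complex `ζ`. -/
noncomputable def PC (n k : ℕ) (a : (Fin n → ℕ) → ℝ) (ξ : Fin n → ℝ) (ζ : ℂ) : ℂ :=
  ∑ α ∈ degLE n (2 * k), (a α : ℂ) * ζ ^ (∑ i, α i) * ((∏ i, ξ i ^ α i : ℝ) : ℂ)

/-! On the circle `|ζ| = ρ = 1 + l²` the principal part dominates:
`|P[a](ζξ)| ≥ ρ^{2k-1} (ρ |P₀[a](ξ)| - ∑_{|α| < 2k} |a_α|) > ρ^{2k-1} (ρ / l - l) = ρ^{2k-1} / l`,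
so the integrand is bounded by `l ρ^{j-2k}` and the standard length estimate for the contour
integral gives `|a_j(ξ)| ≤ ρ · l ρ^{j-2k}`. -/

open Metric

lemma sum_le_of_mem_degLE {n d : ℕ} {α : Fin n → ℕ} (h : α ∈ degLE n d) :
    ∑ i, α i ≤ d := by
  simp only [degLE, mem_biUnion, mem_range, Nat.mem_antidiagonalTuple] at h
  obtain ⟨m, hm, rfl⟩ := h
  omega

lemma degLE_two_mul_eq_union (n : ℕ) {k : ℕ} (hk : 1 ≤ k) :
    degLE n (2 * k) = degEQ n (2 * k) ∪ degLE n (2 * k - 1) := by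
  have h : 2 * k + 1 = 2 * k - 1 + 1 + 1 := by omega
  have h' : 2 * k - 1 + 1 = 2 * k := by omega
  rw [degLE, degLE, degEQ, h, range_add_one, biUnion_insert, h']

lemma disjoint_degEQ_degLE_pred (n : ℕ) {k : ℕ} (hk : 1 ≤ k) :
    Disjoint (degEQ n (2 * k)) (degLE n (2 * k - 1)) := by
  rw [disjoint_left]
  intro α hα hα'
  have h := sum_le_of_mem_degLE hα'
  rw [degEQ, Nat.mem_antidiagonalTuple] at hα
  omega

lemma PC_eq_principal_add (n : ℕ) {k : ℕ} (hk : 1 ≤ k) (a : (Fin n → ℕ) → ℝ)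
    (ξ : Fin n → ℝ) (ζ : ℂ) :
    PC n k a ξ ζ = ζ ^ (2 * k) * (P0 n k a ξ : ℂ) +
      ∑ α ∈ degLE n (2 * k - 1), (a α : ℂ) * ζ ^ (∑ i, α i) * ((∏ i, ξ i ^ α i : ℝ) : ℂ) := by
  rw [PC, degLE_two_mul_eq_union n hk, sum_union (disjoint_degEQ_degLE_pred n hk), P0]
  push_cast
  rw [mul_sum]
  congr 1
  refine sum_congr rfl fun α hα => ?_
  rw [degEQ, Nat.mem_antidiagonalTuple] at hα
  rw [hα]
  ring

lemma abs_prod_pow_le_one {ι : Type*} [Fintype ι] {x : ι → ℝ} (hx : ∀ i, |x i| ≤ 1)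
    (α : ι → ℕ) : |∏ i, x i ^ α i| ≤ 1 := by
  rw [abs_prod]
  exact prod_le_one (fun i _ => abs_nonneg _) fun i _ =>
    (abs_pow (x i) (α i)).le.trans (pow_le_one₀ (abs_nonneg _) (hx i))

lemma norm_sum_degLE_le {n d : ℕ} (a : (Fin n → ℕ) → ℝ) {ξ : Fin n → ℝ}
    (hξ : ∀ i, |ξ i| ≤ 1) {ζ : ℂ} (hζ : 1 ≤ ‖ζ‖) :
    ‖∑ α ∈ degLE n d, (a α : ℂ) * ζ ^ (∑ i, α i) * ((∏ i, ξ i ^ α i : ℝ) : ℂ)‖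
      ≤ (∑ α ∈ degLE n d, |a α|) * ‖ζ‖ ^ d := by
  rw [sum_mul]
  refine (norm_sum_le _ _).trans (sum_le_sum fun α hα => ?_)
  rw [norm_mul, norm_mul, norm_pow, Complex.norm_real, Complex.norm_real, Real.norm_eq_abs,
    Real.norm_eq_abs]
  calc |a α| * ‖ζ‖ ^ (∑ i, α i) * |∏ i, ξ i ^ α i|
      ≤ |a α| * ‖ζ‖ ^ d * 1 := by
        gcongr
        · exact sum_le_of_mem_degLE hα
        · exact abs_prod_pow_le_one hξ α
    _ = |a α| * ‖ζ‖ ^ d := mul_one _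

lemma norm_PC_ge (n : ℕ) {k : ℕ} (hk : 1 ≤ k) (a : (Fin n → ℕ) → ℝ) {ξ : Fin n → ℝ}
    (hξ : ∀ i, |ξ i| ≤ 1) {ζ : ℂ} (hζ : 1 ≤ ‖ζ‖) :
    ‖ζ‖ ^ (2 * k - 1) * (‖ζ‖ * |P0 n k a ξ| - ∑ α ∈ degLE n (2 * k - 1), |a α|)
      ≤ ‖PC n k a ξ ζ‖ := by
  have hprincipal :
      ‖ζ ^ (2 * k) * (P0 n k a ξ : ℂ)‖ = ‖ζ‖ ^ (2 * k - 1) * ‖ζ‖ * |P0 n k a ξ| := by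
    rw [norm_mul, norm_pow, Complex.norm_real, Real.norm_eq_abs, ← pow_succ,
      Nat.sub_add_cancel (by omega)]
  rw [PC_eq_principal_add n hk]
  have hlower := norm_sum_degLE_le (d := 2 * k - 1) a hξ hζ
  have htri := norm_sub_norm_le (ζ ^ (2 * k) * (P0 n k a ξ : ℂ))
    (-∑ α ∈ degLE n (2 * k - 1), (a α : ℂ) * ζ ^ (∑ i, α i) * ((∏ i, ξ i ^ α i : ℝ) : ℂ))
  rw [norm_neg, sub_neg_eq_add, hprincipal] at htri
  linarith

lemma norm_zpow_div_PC_le (n : ℕ) {k : ℕ} (hk : 1 ≤ k) (a : (Fin n → ℕ) → ℝ)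
    {ξ : Fin n → ℝ} (hξ : ∀ i, |ξ i| ≤ 1) {c : ℝ} (hc : 0 < c) (j : ℤ) {ζ : ℂ} (hζ : 1 ≤ ‖ζ‖)
    (hmargin : c ≤ ‖ζ‖ * |P0 n k a ξ| - ∑ α ∈ degLE n (2 * k - 1), |a α|) :
    ‖ζ ^ (j - 1) / PC n k a ξ ζ‖ ≤ ‖ζ‖ ^ (j - 2 * k) / c := by
  have hζ0 : 0 < ‖ζ‖ := one_pos.trans_le hζ
  have hPC : ‖ζ‖ ^ (2 * k - 1) * c ≤ ‖PC n k a ξ ζ‖ :=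
    (mul_le_mul_of_nonneg_left hmargin (by positivity)).trans (norm_PC_ge n hk a hξ hζ)
  have hexp : j - 1 = j - 2 * k + ((2 * k - 1 : ℕ) : ℤ) := by omega
  rw [norm_div, norm_zpow, div_le_div_iff₀ ((by positivity : (0 : ℝ) < _).trans_le hPC) hc]
  calc ‖ζ‖ ^ (j - 1) * c = ‖ζ‖ ^ (j - 2 * k) * (‖ζ‖ ^ (2 * k - 1) * c) := by
        rw [hexp, zpow_add₀ hζ0.ne', zpow_natCast, mul_assoc]
    _ ≤ ‖ζ‖ ^ (j - 2 * k) * ‖PC n k a ξ ζ‖ := by gcongr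

lemma one_div_le_one_add_sq_mul_sub {l p S : ℝ} (hl : 0 < l) (hp : 1 / l < p) (hS : S < l) :
    1 / l ≤ (1 + l ^ 2) * p - S := by
  rw [div_lt_iff₀ hl] at hp
  rw [div_le_iff₀ hl]
  nlinarith

theorem statement6_general (n k l : ℕ) (hk : 1 ≤ k)
    (a : (Fin n → ℕ) → ℝ)
    (ha1 : (∑ α ∈ degLE n (2 * k - 1), |a α|) < (l : ℝ))
    (ha2 : (1 : ℝ) / l < ⨅ ξ : Metric.sphere (0 : EuclideanSpace ℝ (Fin n)) 1,
      |P0 n k a (fun i => (ξ : EuclideanSpace ℝ (Fin n)) i)|)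
    (j : ℕ) (ξ : EuclideanSpace ℝ (Fin n)) (hξ : ‖ξ‖ = 1) :
    ‖(1 / (2 * Real.pi * Complex.I)) *
        ∮ ζ in C(0, 1 + (l : ℝ) ^ 2), ζ ^ ((j : ℤ) - 1) / PC n k a (fun i => ξ i) ζ‖
      ≤ (l : ℝ) * (1 + (l : ℝ) ^ 2) ^ ((j : ℤ) + 1 - 2 * k) := by
  have hl : (0 : ℝ) < l := (sum_nonneg fun α _ => abs_nonneg (a α)).trans_lt ha1
  set ρ : ℝ := 1 + (l : ℝ) ^ 2
  have hρ : 1 ≤ ρ := le_add_of_nonneg_right (sq_nonneg _)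
  have hcoord : ∀ i, |ξ i| ≤ 1 := fun i => by
    simpa only [Real.norm_eq_abs, hξ] using PiLp.norm_apply_le ξ i
  have hP0 : 1 / (l : ℝ) < |P0 n k a (fun i => ξ i)| := by
    refine ha2.trans_le
      (ciInf_le ⟨0, ?_⟩ (⟨ξ, by simp [hξ]⟩ : sphere (0 : EuclideanSpace ℝ (Fin n)) 1))
    rintro _ ⟨_, rfl⟩
    exact abs_nonneg _
  have hbound : ∀ ζ ∈ sphere (0 : ℂ) ρ,
      ‖ζ ^ ((j : ℤ) - 1) / PC n k a (fun i => ξ i) ζ‖ ≤ ρ ^ ((j : ℤ) - 2 * k) / (1 / l) := by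
    intro ζ hζ
    rw [mem_sphere_zero_iff_norm] at hζ
    rw [← hζ]
    exact norm_zpow_div_PC_le n hk a hcoord (by positivity) j (hζ ▸ hρ)
      (hζ ▸ one_div_le_one_add_sq_mul_sub hl hP0 ha1)
  calc _ = ‖(2 * Real.pi * Complex.I)⁻¹ • ∮ ζ in C(0, ρ),
        ζ ^ ((j : ℤ) - 1) / PC n k a (fun i => ξ i) ζ‖ := by rw [one_div, smul_eq_mul]
    _ ≤ ρ * (ρ ^ ((j : ℤ) - 2 * k) / (1 / l)) :=
        circleIntegral.norm_two_pi_i_inv_smul_integral_le_of_norm_le_const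
          (by positivity) hbound
    _ = l * ρ ^ ((j : ℤ) + 1 - 2 * k) := by
        rw [one_div, div_inv_eq_mul, mul_comm _ (l : ℝ), mul_left_comm,
          ← zpow_one_add₀ (by positivity)]
        ring_nf

/-- The bound `|a_j(ξ)| ≤ l (1+l²)^{j+1-2k}` for the contour-integral coefficients
on the circle of radius `ρ_l = 1 + l²`. -/
theorem statement6 (n k l : ℕ) (hn : 2 ≤ n) (hk : 1 ≤ k) (hl : 1 ≤ l)
    (a : (Fin n → ℕ) → ℝ)
    (ha1 : (∑ α ∈ degLE n (2 * k - 1), |a α|) < (l : ℝ))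
    (ha2 : (1 : ℝ) / l < ⨅ ξ : Metric.sphere (0 : EuclideanSpace ℝ (Fin n)) 1,
      |P0 n k a (fun i => (ξ : EuclideanSpace ℝ (Fin n)) i)|)
    (j : ℕ) (ξ : EuclideanSpace ℝ (Fin n)) (hξ : ‖ξ‖ = 1) :
    ‖(1 / (2 * Real.pi * Complex.I)) *
        ∮ ζ in C(0, 1 + (l : ℝ) ^ 2), ζ ^ ((j : ℤ) - 1) / PC n k a (fun i => ξ i) ζ‖
      ≤ (l : ℝ) * (1 + (l : ℝ) ^ 2) ^ ((j : ℤ) + 1 - 2 * k) :=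
  statement6_general n k l hk a ha1 ha2 j ξ hξ
end

section
/- Let n ≥ 2, j ∈ ℕ, q ∈ ℕ with q ≥ 1, and let α ∈ ℕ^n with |α| = q − 1. Let f : ∂B_n → ℝ be real analytic with f(−θ) = (−1)^j f(θ) for all θ ∈ ∂B_n. Define K(x) = ∂_x^α(|x|^{q−n} f(x/|x|)) for x ∈ ℝ^n \ {0}. If j + q is even, then K is homogeneous of degree 1 − n, i.e. K(x) = |x|^{1−n} K(x/|x|) for all x ≠ 0, and ∫_{Π ∩ ∂B_n} K(η) dσ_η = 0 for every hyperplane Π of ℝ^n through the origin. -/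
open MeasureTheory
open scoped ContDiff Pointwise

/-- Partial derivative `∂_{x_i}` of a function on Euclidean space. -/
noncomputable def pdE {n : ℕ} (i : Fin n) (f : EuclideanSpace ℝ (Fin n) → ℝ) :
    EuclideanSpace ℝ (Fin n) → ℝ :=
  fun x => fderiv ℝ f x (EuclideanSpace.single i 1)

/-- Multi-index partial derivative `∂_x^α` of a function on Euclidean space. -/
noncomputable def mderivE {n : ℕ} (α : Fin n → ℕ) (f : EuclideanSpace ℝ (Fin n) → ℝ) :
    EuclideanSpace ℝ (Fin n) → ℝ :=
  (List.finRange n).foldr (fun i g => (pdE i)^[α i] g) f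

/-- Auxiliary predicate: `g` is smooth away from the origin, positively homogeneous of
degree `m` and has parity `ε` under negation. -/
def GoodHom {n : ℕ} (m : ℤ) (ε : ℝ) (g : EuclideanSpace ℝ (Fin n) → ℝ) : Prop :=
  (∀ x : EuclideanSpace ℝ (Fin n), x ≠ 0 → ContDiffAt ℝ ∞ g x) ∧
  (∀ c : ℝ, 0 < c → ∀ x : EuclideanSpace ℝ (Fin n), x ≠ 0 → g (c • x) = c ^ m * g x) ∧
  (∀ x : EuclideanSpace ℝ (Fin n), x ≠ 0 → g (-x) = ε * g x)

lemma goodHom_step {n : ℕ} (i : Fin n) {m : ℤ} {ε : ℝ} {g : EuclideanSpace ℝ (Fin n) → ℝ}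
    (hg : GoodHom m ε g) : GoodHom (m - 1) (-ε) (pdE i g) := by
  obtain ⟨hs, hh, hp⟩ := hg
  refine ⟨?_, ?_, ?_⟩
  · intro x hx
    have h1 : ContDiffAt ℝ ∞ (fderiv ℝ g) x := (hs x hx).fderiv_right (by simp)
    exact h1.clm_apply contDiffAt_const
  · intro c hc x hx
    have hcx : c • x ≠ 0 := smul_ne_zero hc.ne' hx
    have h1 : HasFDerivAt g (fderiv ℝ g (c • x)) (c • x) :=
      ((hs _ hcx).differentiableAt (by simp)).hasFDerivAt
    have h2 : HasFDerivAt (fun y : EuclideanSpace ℝ (Fin n) => c • y)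
        (c • ContinuousLinearMap.id ℝ (EuclideanSpace ℝ (Fin n))) x :=
      (hasFDerivAt_id x).const_smul c
    have hcomp := h1.comp x h2
    have heq : (fun y => g (c • y)) =ᶠ[nhds x] (fun y => c ^ m * g y) := by
      filter_upwards [IsOpen.mem_nhds isOpen_compl_singleton hx] with y hy
      exact hh c hc y hy
    have h3 : HasFDerivAt g (fderiv ℝ g x) x :=
      ((hs x hx).differentiableAt (by simp)).hasFDerivAt
    have h4 : HasFDerivAt (fun y => c ^ m * g y) ((c ^ m) • fderiv ℝ g x) x := h3.const_mul _
    have h5 := (hcomp.congr_of_eventuallyEq heq.symm).unique h4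
    have h6 := congrArg (fun L => L (EuclideanSpace.single i 1)) h5
    simp only [ContinuousLinearMap.comp_apply, ContinuousLinearMap.smul_apply,
      ContinuousLinearMap.coe_id', id_eq, _root_.map_smul, smul_eq_mul] at h6
    unfold pdE
    rw [zpow_sub_one₀ hc.ne']
    field_simp at h6 ⊢
    linarith [h6]
  · intro x hx
    have hnx : -x ≠ 0 := neg_ne_zero.mpr hx
    have h1 : HasFDerivAt g (fderiv ℝ g (-x)) (-x) :=
      ((hs _ hnx).differentiableAt (by simp)).hasFDerivAt
    have h2 : HasFDerivAt (fun y : EuclideanSpace ℝ (Fin n) => -y)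
        (-ContinuousLinearMap.id ℝ (EuclideanSpace ℝ (Fin n))) x := (hasFDerivAt_id x).neg
    have hcomp := h1.comp x h2
    have heq : (fun y => g (-y)) =ᶠ[nhds x] (fun y => ε * g y) := by
      filter_upwards [IsOpen.mem_nhds isOpen_compl_singleton hx] with y hy
      exact hp y hy
    have h3 : HasFDerivAt g (fderiv ℝ g x) x :=
      ((hs x hx).differentiableAt (by simp)).hasFDerivAt
    have h4 : HasFDerivAt (fun y => ε * g y) (ε • fderiv ℝ g x) x := h3.const_mul _
    have h5 := (hcomp.congr_of_eventuallyEq heq.symm).unique h4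
    have h6 := congrArg (fun L => L (EuclideanSpace.single i 1)) h5
    simp only [ContinuousLinearMap.comp_apply, ContinuousLinearMap.smul_apply,
      ContinuousLinearMap.neg_apply, ContinuousLinearMap.coe_id', id_eq, _root_.map_neg,
      smul_eq_mul] at h6
    unfold pdE
    linarith [h6]

lemma goodHom_iter {n : ℕ} (i : Fin n) (k : ℕ) {m : ℤ} {ε : ℝ}
    {g : EuclideanSpace ℝ (Fin n) → ℝ} (hg : GoodHom m ε g) :
    GoodHom (m - k) ((-1) ^ k * ε) ((pdE i)^[k] g) := by
  induction k with
  | zero => simpa using hg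
  | succ k ih =>
      rw [Function.iterate_succ_apply',
        show (m - ((k:ℕ)+1 : ℕ) : ℤ) = m - (k:ℕ) - 1 by push_cast; ring,
        show ((-1:ℝ)) ^ (k+1) * ε = -((-1:ℝ)^k * ε) by ring]
      exact goodHom_step i ih

lemma goodHom_foldr {n : ℕ} (α : Fin n → ℕ) (l : List (Fin n)) {m : ℤ} {ε : ℝ}
    {g : EuclideanSpace ℝ (Fin n) → ℝ} (hg : GoodHom m ε g) :
    GoodHom (m - (l.map α).sum) ((-1) ^ ((l.map α).sum) * ε)
      (l.foldr (fun i g => (pdE i)^[α i] g) g) := by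
  induction l with
  | nil => simpa using hg
  | cons i l ih =>
      rw [List.foldr_cons, List.map_cons, List.sum_cons,
        show (m - (α i + (l.map α).sum : ℕ) : ℤ)
            = m - ((l.map α).sum : ℕ) - (α i : ℕ) by push_cast; ring,
        show ((-1:ℝ)) ^ (α i + (l.map α).sum) * ε
            = (-1:ℝ) ^ (α i) * ((-1:ℝ) ^ ((l.map α).sum) * ε) by rw [pow_add]; ring]
      exact goodHom_iter i (α i) ih

lemma contDiffAt_zpow' {m : ℤ} {y : ℝ} (hy : y ≠ 0) {N : WithTop ℕ∞} :
    ContDiffAt ℝ N (fun t : ℝ => t ^ m) y := by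
  rcases le_or_gt 0 m with h | h
  · lift m to ℕ using h
    simpa [zpow_natCast] using (contDiff_id.pow m).contDiffAt (x := y)
  · obtain ⟨k, rfl⟩ : ∃ k : ℕ, m = -(k : ℤ) := ⟨m.natAbs, by
      rw [Int.ofNat_natAbs_of_nonpos h.le]; ring⟩
    have : (fun t : ℝ => t ^ (-(k:ℤ))) = fun t : ℝ => (t ^ k)⁻¹ := by
      funext t; rw [zpow_neg, zpow_natCast]
    rw [this]
    exact ((contDiff_id.pow k).contDiffAt (x := y)).inv (pow_ne_zero _ hy)

lemma goodHom_base {n j q : ℕ}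
    (U : Set (EuclideanSpace ℝ (Fin n)))
    (hsub : Metric.sphere (0 : EuclideanSpace ℝ (Fin n)) 1 ⊆ U)
    (F : EuclideanSpace ℝ (Fin n) → ℝ) (hF : AnalyticOnNhd ℝ F U)
    (hpar : ∀ θ : EuclideanSpace ℝ (Fin n), ‖θ‖ = 1 → F (-θ) = (-1 : ℝ) ^ j * F θ) :
    GoodHom ((q : ℤ) - n) ((-1 : ℝ) ^ j)
      (fun y => ‖y‖ ^ ((q : ℤ) - n) * F (‖y‖⁻¹ • y)) := by
  have hmemU : ∀ x : EuclideanSpace ℝ (Fin n), x ≠ 0 → (‖x‖⁻¹ • x) ∈ U := fun x hx =>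
    hsub (by
    rw [Metric.mem_sphere, dist_zero_right]
    simpa using norm_smul_inv_norm (𝕜 := ℝ) hx)
  refine ⟨?_, ?_, ?_⟩
  · intro x hx
    have hnx : ‖x‖ ≠ 0 := norm_ne_zero_iff.mpr hx
    have h1 : ContDiffAt ℝ ∞ (fun y : EuclideanSpace ℝ (Fin n) => ‖y‖) x :=
      contDiffAt_norm ℝ hx
    have h2 : ContDiffAt ℝ ∞ (fun y : EuclideanSpace ℝ (Fin n) => ‖y‖ ^ ((q:ℤ) - n)) x :=
      (contDiffAt_zpow' hnx).comp x h1
    have h3 : ContDiffAt ℝ ∞ (fun y : EuclideanSpace ℝ (Fin n) => ‖y‖⁻¹ • y) x :=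
      ContDiffAt.smul (h1.inv hnx) contDiffAt_id
    have h4 : ContDiffAt ℝ ∞ F (‖x‖⁻¹ • x) := (hF _ (hmemU x hx)).contDiffAt
    exact h2.mul (ContDiffAt.comp (g := F)
      (f := fun y : EuclideanSpace ℝ (Fin n) => ‖y‖⁻¹ • y) x h4 h3)
  · intro c hc x hx
    have hnx : ‖x‖ ≠ 0 := norm_ne_zero_iff.mpr hx
    have h1 : ‖c • x‖ = c * ‖x‖ := by
      rw [norm_smul, Real.norm_of_nonneg hc.le]
    have h2 : (c * ‖x‖)⁻¹ • (c • x) = ‖x‖⁻¹ • x := by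
      rw [mul_inv, smul_smul]
      congr 1
      field_simp
    beta_reduce
    rw [h1, h2, mul_zpow]
    ring
  · intro x hx
    have hnx : ‖x‖ ≠ 0 := norm_ne_zero_iff.mpr hx
    have h1 : ‖-x‖ = ‖x‖ := norm_neg x
    have h2 : ‖x‖⁻¹ • (-x) = -(‖x‖⁻¹ • x) := smul_neg _ _
    beta_reduce
    rw [h1, h2, hpar (‖x‖⁻¹ • x) (by simpa using norm_smul_inv_norm (𝕜 := ℝ) hx)]
    ring

section NegSphere

variable {E : Type*} [NormedAddCommGroup E] [NormedSpace ℝ E] [MeasurableSpace E]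
  [BorelSpace E] [FiniteDimensional ℝ E] (μ : Measure E) [μ.IsAddHaarMeasure]

/-- Negation on the unit sphere as a measurable equiv. -/
noncomputable def negSphereME : Metric.sphere (0 : E) 1 ≃ᵐ Metric.sphere (0 : E) 1 where
  toEquiv := Equiv.neg _
  measurable_toFun := by
    apply Measurable.subtype_mk
    exact continuous_subtype_val.neg.measurable
  measurable_invFun := by
    apply Measurable.subtype_mk
    exact continuous_subtype_val.neg.measurable

lemma map_neg_toSphere : Measure.map (negSphereME (E := E)) μ.toSphere = μ.toSphere := by
  ext s hs
  rw [MeasurableEquiv.map_apply]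
  have hs' : MeasurableSet (negSphereME (E := E) ⁻¹' s) := negSphereME.measurable hs
  rw [Measure.toSphere_apply' _ hs', Measure.toSphere_apply' _ hs]
  congr 1
  have himg : (Subtype.val '' (negSphereME (E := E) ⁻¹' s)) = -(Subtype.val '' s) := by
    ext y
    constructor
    · rintro ⟨θ, hθ, rfl⟩
      exact ⟨-θ, hθ, by simp⟩
    · rintro ⟨θ, hθ, hy⟩
      exact ⟨-θ, by simpa [negSphereME, Equiv.neg] using hθ, by
        simpa using congrArg Neg.neg hy⟩
  rw [himg]
  have hsmul : Set.Ioo (0:ℝ) 1 • (-(Subtype.val '' s))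
      = -(Set.Ioo (0:ℝ) 1 • (Subtype.val '' s)) := by
    ext y
    simp only [Set.mem_smul, Set.mem_neg]
    constructor
    · rintro ⟨r, hr, b, hb, rfl⟩
      exact ⟨r, hr, -b, hb, by rw [smul_neg]⟩
    · rintro hy
      obtain ⟨r, hr, b, hb, hrb⟩ := hy
      exact ⟨r, hr, -b, by simpa using hb, by rw [smul_neg, hrb]; simp⟩
  rw [hsmul]
  exact Measure.measure_neg μ _

end NegSphere

/-- If `f` is real analytic on the sphere with parity `f(−θ) = (−1)^j f(θ)`,
`|α| = q − 1` and `j + q` is even, then `K = ∂_x^α(|x|^{q−n} f(x/|x|))` is homogeneous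
of degree `1 − n` and has vanishing integral over every great sphere (great spheres
being parametrized by linear isometries of `ℝ^{n-1}` into `ℝ^n`). -/
theorem statement13 (n j q : ℕ) (hn : 2 ≤ n) (hq : 1 ≤ q)
    (α : Fin n → ℕ) (hα : ∑ i, α i = q - 1)
    (U : Set (EuclideanSpace ℝ (Fin n))) (hU : IsOpen U)
    (hsub : Metric.sphere (0 : EuclideanSpace ℝ (Fin n)) 1 ⊆ U)
    (F : EuclideanSpace ℝ (Fin n) → ℝ) (hF : AnalyticOnNhd ℝ F U)
    (hpar : ∀ θ : EuclideanSpace ℝ (Fin n), ‖θ‖ = 1 → F (-θ) = (-1 : ℝ) ^ j * F θ)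
    (heven : Even (j + q))
    (K : EuclideanSpace ℝ (Fin n) → ℝ)
    (hK : ∀ x, K x = mderivE α (fun y => ‖y‖ ^ ((q : ℤ) - n) * F (‖y‖⁻¹ • y)) x) :
    (∀ x : EuclideanSpace ℝ (Fin n), x ≠ 0 →
      K x = ‖x‖ ^ ((1 : ℤ) - n) * K (‖x‖⁻¹ • x)) ∧
    (∀ e : EuclideanSpace ℝ (Fin (n - 1)) →ₗᵢ[ℝ] EuclideanSpace ℝ (Fin n),
      ∫ η : Metric.sphere (0 : EuclideanSpace ℝ (Fin (n - 1))) 1,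
        K (e η) ∂(volume : Measure (EuclideanSpace ℝ (Fin (n - 1)))).toSphere = 0) := by
  have hGood := goodHom_foldr α (List.finRange n)
    (goodHom_base (j := j) (q := q) U hsub F hF hpar)
  have hsum : (((List.finRange n).map α).sum) = q - 1 := by
    rw [← Fin.sum_univ_def]; exact hα
  rw [hsum] at hGood
  have hm : ((q : ℤ) - n - ((q - 1 : ℕ) : ℤ)) = 1 - n := by
    rw [Nat.cast_sub hq]; push_cast; ring
  have hsign : ((-1 : ℝ) ^ (q - 1) * (-1 : ℝ) ^ j) = -1 := by
    rw [← pow_add]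
    apply Odd.neg_one_pow
    obtain ⟨t, ht⟩ := heven
    exact ⟨t - 1, by omega⟩
  rw [hm, hsign] at hGood
  obtain ⟨hs, hh, hp⟩ := hGood
  have hKodd : ∀ x : EuclideanSpace ℝ (Fin n), x ≠ 0 → K (-x) = -K x := by
    intro x hx
    rw [hK, hK]
    unfold mderivE
    rw [hp x hx]
    ring
  constructor
  · intro x hx
    have hnx : (0:ℝ) < ‖x‖ := norm_pos_iff.mpr hx
    have hhom := hh ‖x‖⁻¹ (by positivity) x hx
    rw [hK x, hK (‖x‖⁻¹ • x)]
    unfold mderivE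
    rw [hhom, inv_zpow, ← zpow_neg, ← mul_assoc, ← zpow_add₀ hnx.ne']
    norm_num
  · intro e
    have hodd : ∀ η : Metric.sphere (0 : EuclideanSpace ℝ (Fin (n-1))) 1,
        K (e ((negSphereME η : Metric.sphere (0 : EuclideanSpace ℝ (Fin (n-1))) 1)
          : EuclideanSpace ℝ (Fin (n-1)))) = -K (e η) := by
      intro η
      have hcoe : ((negSphereME η : Metric.sphere (0 : EuclideanSpace ℝ (Fin (n-1))) 1)
          : EuclideanSpace ℝ (Fin (n-1))) = -(η : EuclideanSpace ℝ (Fin (n-1))) := rfl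
      rw [hcoe, map_neg]
      apply hKodd
      intro h
      have : ‖e (η : EuclideanSpace ℝ (Fin (n-1)))‖ = 1 := by
        rw [e.norm_map]
        exact norm_eq_of_mem_sphere η
      rw [h] at this
      simp at this
    have key : ∫ η, K (e η)
        ∂(volume : Measure (EuclideanSpace ℝ (Fin (n-1)))).toSphere
        = -∫ η, K (e η)
        ∂(volume : Measure (EuclideanSpace ℝ (Fin (n-1)))).toSphere := by
      have hmi := MeasureTheory.integral_map_equiv
        (μ := (volume : Measure (EuclideanSpace ℝ (Fin (n-1)))).toSphere)
        negSphereME (fun η => K (e η))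
      rw [map_neg_toSphere] at hmi
      conv_lhs => rw [hmi]
      rw [show (fun x : Metric.sphere (0 : EuclideanSpace ℝ (Fin (n-1))) 1 =>
          K (e ((negSphereME x : Metric.sphere (0 : EuclideanSpace ℝ (Fin (n-1))) 1)
            : EuclideanSpace ℝ (Fin (n-1)))))
          = (fun x : Metric.sphere (0 : EuclideanSpace ℝ (Fin (n-1))) 1 =>
            -K (e (x : EuclideanSpace ℝ (Fin (n-1))))) from funext hodd]
      exact integral_neg
        (μ := (volume : Measure (EuclideanSpace ℝ (Fin (n-1)))).toSphere)
        (fun x => K (e (x : EuclideanSpace ℝ (Fin (n-1)))))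
    linarith
end

section
/- Let n ≥ 2 and j ∈ ℕ with j ≥ 1. Let F, G : ∂B_n × ℝ → ℝ be real analytic. Define H : ℝ^n \ {0} → ℝ by H(x) = |x|^j F(x/|x|, |x|) + |x|^j log|x| G(x/|x|, |x|). Then H extends to a function of class C^{j−1} on ℝ^n. -/
/-!
Write `r = ‖x‖` and `ω = x / r`. Away from the origin, differentiating
`r ^ j F(ω, r) + r ^ j log r G(ω, r)` once gives a function of the same shape with `j - 1` in
place of `j`: since `d(ω, r) = r⁻¹ (v - ⟪ω, v⟫ ω, r ⟪ω, v⟫)`, the new coefficients are built from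
`F`, `G` and their derivatives as analytic functions of `(ω, r)` alone, so they are again
analytic on the cylinder `‖ω‖ = 1`. At the origin the function is `O(r ^ j |log r|)`, hence
continuous for `j ≥ 1` and differentiable with derivative `0` for `j ≥ 2`. Induction on `j`.
-/

open Real Filter Topology Set ContinuousLinearMap

noncomputable section

namespace PolarLogExpansion

universe u v

variable {E : Type u} {V : Type v} [NormedAddCommGroup E] [InnerProductSpace ℝ E]
  [NormedAddCommGroup V]

lemma continuous_pow_mul_log {j : ℕ} (hj : 1 ≤ j) : Continuous fun t : ℝ => t ^ j * log t := by
  obtain ⟨k, rfl⟩ := Nat.exists_eq_add_of_le' hj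
  refine ((continuous_pow k).mul continuous_mul_log).congr fun t => ?_
  simp only [Pi.mul_apply]
  ring

def polar (x : E) : E × ℝ := (‖x‖⁻¹ • x, ‖x‖)

def unitCylinder (E : Type*) [NormedAddCommGroup E] : Set (E × ℝ) := {p | ‖p.1‖ = 1}

lemma polar_mem_unitCylinder {x : E} (hx : x ≠ 0) : polar x ∈ unitCylinder E := by
  simp [polar, unitCylinder, norm_smul, norm_ne_zero_iff.2 hx]

lemma continuousOn_polar : ContinuousOn (polar : E → E × ℝ) {0}ᶜ := by
  intro x hx
  exact ((continuous_norm.continuousAt.inv₀ (norm_ne_zero_iff.2 hx)).smul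
    continuousAt_id).prodMk continuous_norm.continuousAt |>.continuousWithinAt

lemma exists_norm_comp_polar_le [FiniteDimensional ℝ E] {F : E × ℝ → V}
    (hF : ContinuousOn F (unitCylinder E)) :
    ∃ M, ∀ y : E, y ≠ 0 → ‖y‖ ≤ 1 → ‖F (polar y)‖ ≤ M := by
  have hK : IsCompact (Metric.sphere (0 : E) 1 ×ˢ Icc (-1 : ℝ) 1) :=
    (isCompact_sphere 0 1).prod isCompact_Icc
  have hsub : Metric.sphere (0 : E) 1 ×ˢ Icc (-1 : ℝ) 1 ⊆ unitCylinder E :=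
    fun p hp => by simpa [unitCylinder] using hp.1
  obtain ⟨M, hM⟩ := hK.exists_bound_of_continuousOn (hF.mono hsub)
  refine ⟨M, fun y hy hy1 => hM _ ⟨?_, ?_, hy1⟩⟩
  · simpa [unitCylinder] using polar_mem_unitCylinder hy
  · exact (neg_one_lt_zero.trans_le (norm_nonneg y)).le

variable [NormedSpace ℝ V]

open scoped Classical in
def radialLogExt (j : ℕ) (F G : E × ℝ → V) (x : E) : V :=
  if x = 0 then 0 else ‖x‖ ^ j • F (polar x) + (‖x‖ ^ j * log ‖x‖) • G (polar x)

@[simp]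
lemma radialLogExt_zero (j : ℕ) (F G : E × ℝ → V) : radialLogExt j F G 0 = 0 := by
  simp [radialLogExt]

lemma radialLogExt_of_ne_zero (j : ℕ) (F G : E × ℝ → V) {x : E} (hx : x ≠ 0) :
    radialLogExt j F G x = ‖x‖ ^ j • F (polar x) + (‖x‖ ^ j * log ‖x‖) • G (polar x) := by
  simp [radialLogExt, hx]

lemma radialLogExt_eventuallyEq (j : ℕ) (F G : E × ℝ → V) {x : E} (hx : x ≠ 0) :
    radialLogExt j F G =ᶠ[𝓝 x]
      fun y => ‖y‖ ^ j • F (polar y) + (‖y‖ ^ j * log ‖y‖) • G (polar y) := by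
  filter_upwards [isOpen_compl_singleton.mem_nhds hx] with y hy
  exact radialLogExt_of_ne_zero j F G hy

lemma radialLogExt_succ (j : ℕ) (F G : E × ℝ → V) (x : E) :
    radialLogExt (j + 1) F G x = ‖x‖ • radialLogExt j F G x := by
  rcases eq_or_ne x 0 with rfl | hx
  · simp
  · simp only [radialLogExt_of_ne_zero _ _ _ hx, smul_add, smul_smul]
    ring_nf

lemma norm_radialLogExt_le (j : ℕ) (F G : E × ℝ → V) {y : E} (hy : y ≠ 0) {MF MG : ℝ}
    (hMF : ‖F (polar y)‖ ≤ MF) (hMG : ‖G (polar y)‖ ≤ MG) :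
    ‖radialLogExt j F G y‖ ≤ ‖y‖ ^ j * MF + |‖y‖ ^ j * log ‖y‖| * MG := by
  rw [radialLogExt_of_ne_zero j F G hy]
  refine (norm_add_le _ _).trans ?_
  rw [norm_smul, norm_smul, Real.norm_of_nonneg (by positivity), Real.norm_eq_abs]
  gcongr

lemma continuous_radialLogExt [FiniteDimensional ℝ E] {j : ℕ} (hj : 1 ≤ j) {F G : E × ℝ → V}
    (hF : ContinuousOn F (unitCylinder E)) (hG : ContinuousOn G (unitCylinder E)) :
    Continuous (radialLogExt j F G) := by
  rw [continuous_iff_continuousAt]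
  intro x
  rcases eq_or_ne x 0 with rfl | hx
  · obtain ⟨MF, hMF⟩ := exists_norm_comp_polar_le hF
    obtain ⟨MG, hMG⟩ := exists_norm_comp_polar_le hG
    set bound : E → ℝ := fun y => ‖y‖ ^ j * MF + |‖y‖ ^ j * log ‖y‖| * MG
    have hbound : Tendsto bound (𝓝 0) (𝓝 0) := by
      have : Continuous bound := by
        have := (continuous_pow_mul_log hj).comp (continuous_norm (E := E))
        fun_prop
      simpa [bound, zero_pow (by omega : j ≠ 0)] using this.tendsto 0
    have hle : ∀ᶠ y in 𝓝 (0 : E), ‖radialLogExt j F G y‖ ≤ bound y := by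
      filter_upwards [Metric.closedBall_mem_nhds (0 : E) one_pos] with y hy
      rcases eq_or_ne y 0 with rfl | hy0
      · simp [bound, zero_pow (by omega : j ≠ 0)]
      · exact norm_radialLogExt_le j F G hy0 (hMF y hy0 (by simpa using hy))
          (hMG y hy0 (by simpa using hy))
    rw [ContinuousAt, radialLogExt_zero, tendsto_zero_iff_norm_tendsto_zero]
    exact squeeze_zero' (.of_forall fun _ => norm_nonneg _) hle hbound
  · have hpolar : MapsTo (polar : E → E × ℝ) {0}ᶜ (unitCylinder E) :=
      fun y hy => polar_mem_unitCylinder hy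
    have hFσ := (hF.comp continuousOn_polar hpolar).continuousAt
      (isOpen_compl_singleton.mem_nhds hx)
    have hGσ := (hG.comp continuousOn_polar hpolar).continuousAt
      (isOpen_compl_singleton.mem_nhds hx)
    have hlog : ContinuousAt (fun y : E => log ‖y‖) x :=
      continuous_norm.continuousAt.log (norm_ne_zero_iff.2 hx)
    refine ContinuousAt.congr ?_ (radialLogExt_eventuallyEq j F G hx).symm
    exact ((continuous_norm.pow j).continuousAt.smul hFσ).add
      (((continuous_norm.pow j).continuousAt.mul hlog).smul hGσ)

lemma hasFDerivAt_norm_smul_zero {g : E → V} (hg : Tendsto g (𝓝 0) (𝓝 0)) :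
    HasFDerivAt (fun y => ‖y‖ • g y) (0 : E →L[ℝ] V) 0 := by
  rw [hasFDerivAt_iff_tendsto]
  simp only [sub_zero, norm_zero, zero_smul, zero_apply]
  refine squeeze_zero (fun _ => by positivity) (fun y => ?_)
    (tendsto_zero_iff_norm_tendsto_zero.1 hg)
  rw [norm_smul, norm_norm, ← mul_assoc]
  exact mul_le_of_le_one_left (norm_nonneg _) (inv_mul_le_one_of_le₀ le_rfl (norm_nonneg _))

lemma hasFDerivAt_radialLogExt_zero [FiniteDimensional ℝ E] {j : ℕ} (hj : 1 ≤ j)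
    {F G : E × ℝ → V} (hF : ContinuousOn F (unitCylinder E))
    (hG : ContinuousOn G (unitCylinder E)) :
    HasFDerivAt (radialLogExt (j + 1) F G) (0 : E →L[ℝ] V) 0 := by
  rw [show radialLogExt (j + 1) F G = fun y => ‖y‖ • radialLogExt j F G y from
    funext (radialLogExt_succ j F G)]
  exact hasFDerivAt_norm_smul_zero
    (by simpa using (continuous_radialLogExt hj hF hG).tendsto 0)

lemma hasFDerivAt_norm_of_ne_zero {x : E} (hx : x ≠ 0) :
    HasFDerivAt (fun y : E => ‖y‖) (innerSL ℝ (‖x‖⁻¹ • x)) x := by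
  have h := (hasStrictFDerivAt_norm_sq x).hasFDerivAt.sqrt (by positivity)
  simp only [Real.sqrt_sq (norm_nonneg _)] at h
  convert h using 1
  ext v
  have : ‖x‖ ≠ 0 := norm_ne_zero_iff.2 hx
  simp only [map_smul, smul_apply, coe_innerSL_apply, smul_eq_mul, one_div, mul_inv_rev,
    nsmul_eq_mul, Nat.cast_ofNat]
  field_simp

-- `‖x‖` times the derivative of `polar` at `x` (`hasFDerivAt_polar`), written as a function of
-- `polar x` so that the coefficients built from it stay analytic on the cylinder.
def polarFDerivScaled (p : E × ℝ) : E →L[ℝ] E × ℝ :=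
  inl ℝ E ℝ + (innerSL ℝ p.1).smulRight (-p.1, p.2)

lemma hasFDerivAt_polar {x : E} (hx : x ≠ 0) :
    HasFDerivAt polar (‖x‖⁻¹ • polarFDerivScaled (polar x)) x := by
  have hr : ‖x‖ ≠ 0 := norm_ne_zero_iff.2 hx
  have hN := hasFDerivAt_norm_of_ne_zero hx
  have hinv := (hasDerivAt_inv hr).comp_hasFDerivAt x hN
  refine ((hinv.smul (hasFDerivAt_id x)).prodMk hN).congr_fderiv ?_
  ext v
  · simp only [Function.comp_apply, map_smul, smul_smul, neg_mul, neg_smul, id_eq,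
      ContinuousLinearMap.prod_apply, add_apply, smul_apply, id_apply, smulRight_apply, neg_apply,
      coe_innerSL_apply, smul_eq_mul, polarFDerivScaled, polar, smul_add, inl_apply, Prod.smul_mk,
      mul_zero, smul_neg, Prod.mk_add_mk, zero_add, add_right_inj, neg_inj]
    ring_nf
  · simp only [Function.comp_apply, map_smul, neg_smul, ContinuousLinearMap.prod_apply,
      add_apply, smul_apply, smulRight_apply, neg_apply, coe_innerSL_apply, smul_eq_mul,
      polarFDerivScaled, polar, inl_apply, Prod.smul_mk, Prod.mk_add_mk, zero_add]
    field_simp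

-- The coefficients after one differentiation (`hasFDerivAt_radialLogExt`): as `d r = ⟪ω, ·⟫` and
-- `d(r ^ c log r) = r ^ (c - 1) (c log r + 1) d r`, the `F`-coefficient also picks up `G`.
def radialDerivCoeff (c : ℝ) (F G : E × ℝ → V) (p : E × ℝ) : E →L[ℝ] V :=
  (innerSL ℝ p.1).smulRight (c • F p + G p) + (fderiv ℝ F p).comp (polarFDerivScaled p)

lemma hasFDerivAt_radialLogExt (j : ℕ) {F G : E × ℝ → V} {x : E} (hx : x ≠ 0)
    (hF : DifferentiableAt ℝ F (polar x)) (hG : DifferentiableAt ℝ G (polar x)) :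
    HasFDerivAt (radialLogExt (j + 1) F G)
      (radialLogExt j (radialDerivCoeff (j + 1) F G) (radialDerivCoeff (j + 1) G 0) x) x := by
  have hr : ‖x‖ ≠ 0 := norm_ne_zero_iff.2 hx
  have hN := hasFDerivAt_norm_of_ne_zero hx
  have hpow := (hasDerivAt_pow (j + 1) ‖x‖).comp_hasFDerivAt x hN
  have hlog := hN.log hr
  have hFσ := hF.hasFDerivAt.comp x (hasFDerivAt_polar hx)
  have hGσ := hG.hasFDerivAt.comp x (hasFDerivAt_polar hx)
  refine (((hpow.smul hFσ).add ((hpow.mul hlog).smul hGσ)).congr_of_eventuallyEq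
    (radialLogExt_eventuallyEq (j + 1) F G hx)).congr_fderiv ?_
  rw [radialLogExt_of_ne_zero j _ _ hx]
  ext v
  simp only [Function.comp_apply, polar, polarFDerivScaled, map_smul, smul_add, comp_add,
    comp_smulₛₗ, map_inv₀, ringHom_apply, Nat.cast_add, Nat.cast_one, add_tsub_cancel_right,
    Pi.mul_apply, add_apply, smul_apply, comp_apply, inl_apply, smulRight_apply,
    coe_innerSL_apply, smul_eq_mul, Prod.smul_mk, smul_neg, radialDerivCoeff, Pi.zero_apply,
    add_zero]
  match_scalars <;> field_simp <;> ring

lemma analyticAt_polarFDerivScaled (p : E × ℝ) :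
    AnalyticAt ℝ (polarFDerivScaled : E × ℝ → E →L[ℝ] E × ℝ) p :=
  analyticAt_const.add <| ((smulRightL ℝ E (E × ℝ)).analyticAt_bilinear _).comp₂
    (f := fun q : E × ℝ => innerSL ℝ q.1) (g := fun q : E × ℝ => (-q.1, q.2))
    (((innerSL ℝ).comp (fst ℝ E ℝ)).analyticAt p) (((-(fst ℝ E ℝ)).prod (snd ℝ E ℝ)).analyticAt p)

lemma analyticAt_radialDerivCoeff [CompleteSpace V] (c : ℝ) {F G : E × ℝ → V} {p : E × ℝ}
    (hF : AnalyticAt ℝ F p) (hG : AnalyticAt ℝ G p) :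
    AnalyticAt ℝ (radialDerivCoeff c F G) p := by
  refine AnalyticAt.add ?_ ?_
  · exact ((smulRightL ℝ E V).analyticAt_bilinear _).comp₂
      (f := fun q : E × ℝ => innerSL ℝ q.1) (g := fun q => c • F q + G q)
      (((innerSL ℝ).comp (fst ℝ E ℝ)).analyticAt p) ((analyticAt_const.smul hF).add hG)
  · exact ((compL ℝ E (E × ℝ) V).analyticAt_bilinear _).comp₂ hF.fderiv
      (analyticAt_polarFDerivScaled p)

-- `W` lives in the universe of `E` so that the induction can pass to `E →L[ℝ] W`.
theorem contDiff_radialLogExt [FiniteDimensional ℝ E] (m : ℕ) {W : Type u}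
    [NormedAddCommGroup W] [NormedSpace ℝ W] [CompleteSpace W] {F G : E × ℝ → W}
    (hF : AnalyticOnNhd ℝ F (unitCylinder E)) (hG : AnalyticOnNhd ℝ G (unitCylinder E)) :
    ContDiff ℝ m (radialLogExt (m + 1) F G) := by
  induction m generalizing W with
  | zero =>
    simpa using continuous_radialLogExt le_rfl hF.continuousOn hG.continuousOn
  | succ m ih =>
    rw [Nat.cast_succ, contDiff_succ_iff_hasFDerivAt]
    set c : ℝ := (m + 1 : ℕ) + 1
    refine ⟨radialLogExt (m + 1) (radialDerivCoeff c F G) (radialDerivCoeff c G 0),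
      ih (fun p hp => analyticAt_radialDerivCoeff c (hF p hp) (hG p hp))
        (fun p hp => analyticAt_radialDerivCoeff c (hG p hp) analyticAt_const), fun x => ?_⟩
    rcases eq_or_ne x 0 with rfl | hx
    · rw [radialLogExt_zero]
      exact hasFDerivAt_radialLogExt_zero (by omega) hF.continuousOn hG.continuousOn
    · exact hasFDerivAt_radialLogExt _ hx (hF _ (polar_mem_unitCylinder hx)).differentiableAt
        (hG _ (polar_mem_unitCylinder hx)).differentiableAt

end PolarLogExpansion

end

theorem statement17_general (n j : ℕ) (hj : 1 ≤ j)
    (F G : EuclideanSpace ℝ (Fin n) → ℝ → ℝ)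
    (hF : AnalyticOnNhd ℝ (fun p : EuclideanSpace ℝ (Fin n) × ℝ => F p.1 p.2)
      {p | ‖p.1‖ = 1})
    (hG : AnalyticOnNhd ℝ (fun p : EuclideanSpace ℝ (Fin n) × ℝ => G p.1 p.2)
      {p | ‖p.1‖ = 1}) :
    ∃ H : EuclideanSpace ℝ (Fin n) → ℝ, ContDiff ℝ (j - 1 : ℕ) H ∧
      ∀ x : EuclideanSpace ℝ (Fin n), x ≠ 0 →
        H x = ‖x‖ ^ j * F (‖x‖⁻¹ • x) ‖x‖
          + ‖x‖ ^ j * Real.log ‖x‖ * G (‖x‖⁻¹ • x) ‖x‖ := by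
  obtain ⟨m, rfl⟩ := Nat.exists_eq_add_of_le' hj
  refine ⟨PolarLogExpansion.radialLogExt (m + 1) (fun p => F p.1 p.2) (fun p => G p.1 p.2),
    by simpa using PolarLogExpansion.contDiff_radialLogExt m hF hG, fun x hx => ?_⟩
  simp [PolarLogExpansion.radialLogExt_of_ne_zero _ _ _ hx, PolarLogExpansion.polar]

/-- For `F, G` real analytic on `∂B_n × ℝ` and `j ≥ 1`, the function
`H(x) = |x|^j F(x/|x|,|x|) + |x|^j log|x| G(x/|x|,|x|)` extends to a `C^{j−1}`
function on `ℝⁿ`. -/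
theorem statement17 (n j : ℕ) (hn : 2 ≤ n) (hj : 1 ≤ j)
    (F G : EuclideanSpace ℝ (Fin n) → ℝ → ℝ)
    (hF : AnalyticOnNhd ℝ (fun p : EuclideanSpace ℝ (Fin n) × ℝ => F p.1 p.2)
      {p | ‖p.1‖ = 1})
    (hG : AnalyticOnNhd ℝ (fun p : EuclideanSpace ℝ (Fin n) × ℝ => G p.1 p.2)
      {p | ‖p.1‖ = 1}) :
    ∃ H : EuclideanSpace ℝ (Fin n) → ℝ, ContDiff ℝ (j - 1 : ℕ) H ∧
      ∀ x : EuclideanSpace ℝ (Fin n), x ≠ 0 →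
        H x = ‖x‖ ^ j * F (‖x‖⁻¹ • x) ‖x‖
          + ‖x‖ ^ j * Real.log ‖x‖ * G (‖x‖⁻¹ • x) ‖x‖ :=
  statement17_general n j hj F G hF hG
end
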